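/- arXiv:1601.02771 — 5 statements merged into one kernel-verified Lean document; each statement's English description precedes it below -/
import Mathlib

section
/- Let A be a finite alphabet, a ∈ A, and σ a non-erasing morphism of A* prolongable on a (i.e. σ(a) = aW for some nonempty W and |σⁿ(a)| → ∞) such that every letter of A occurs in the infinite fixed point σ^ω(a). Then the letter a has maximal growth: there exists a real constant C such that |σⁿ(c)| < C·|σⁿ(a)| for every letter c ∈ A and every positive integer n. -/
/-- `w` is a prefix of the infinite word `a`. -/
def IsPrefOf {A : Type*} (w : List A) (a : ℕ → A) : Prop :=
  ∀ i : Fin w.length, w.get i = a i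

/-- Fractional power `V^α`: `V^⌊α⌋` followed by the prefix of `V`
of length `⌈{α}·|V|⌉`. -/
noncomputable def fracPow {A : Type*} (V : List A) (α : ℝ) : List A :=
  (List.replicate ⌊α⌋₊ V).flatten ++ V.take ⌈Int.fract α * V.length⌉₊

/-- The set of admissible exponents in the definition of the Diophantine exponent. -/
def dioSet {A : Type*} (a : ℕ → A) : Set ℝ :=
  {ρ | ∀ N : ℕ, ∃ (U V : List A) (α : ℝ), V ≠ [] ∧ 1 ≤ α ∧
    IsPrefOf (U ++ fracPow V α) a ∧ N ≤ (U ++ fracPow V α).length ∧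
    ρ ≤ ((U ++ fracPow V α).length : ℝ) / ((U.length : ℝ) + (V.length : ℝ))}

/-- Diophantine exponent of an infinite word. -/
noncomputable def dio {A : Type*} (a : ℕ → A) : EReal :=
  sSup ((fun ρ : ℝ => (ρ : EReal)) '' dioSet a)

/-- Action of a morphism (given by its values on letters) on a finite word. -/
def mapW {A : Type*} (σ : A → List A) (w : List A) : List A := w.flatMap σ

/-- `n`-th iterate of a morphism applied to a word. -/
def iterW {A : Type*} (σ : A → List A) (n : ℕ) (w : List A) : List A :=
  (mapW σ)^[n] w

/-- `σ` is prolongable on the letter `a`. -/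
def Prolongable {A : Type*} (σ : A → List A) (a : A) : Prop :=
  (∃ W : List A, W ≠ [] ∧ σ a = a :: W) ∧
  Filter.Tendsto (fun n => (iterW σ n [a]).length) Filter.atTop Filter.atTop

/-- The letter `b` has maximal growth for `σ`. -/
def MaxGrowth {A : Type*} (σ : A → List A) (b : A) : Prop :=
  ∃ C : ℝ, ∀ c : A, ∀ n : ℕ, 1 ≤ n →
    ((iterW σ n [c]).length : ℝ) < C * ((iterW σ n [b]).length : ℝ)

/-- Incidence matrix of a morphism, viewed over `ℂ`. -/
noncomputable def incMat {A : Type*} [Fintype A] [DecidableEq A]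
    (σ : A → List A) : Matrix A A ℂ :=
  fun i j => ((σ j).count i : ℂ)

/-- Spectral radius of the incidence matrix of a morphism. -/
noncomputable def specRad {A : Type*} [Fintype A] [DecidableEq A]
    (σ : A → List A) : ℝ :=
  sSup ((fun μ : ℂ => ‖μ‖) '' spectrum ℂ (incMat σ))


/-!
Every letter `c` occurs in some `σ^m(a)`, because it occurs in the fixed point, whose prefixes
`σ^m(a)` grow without bound. Hence `σ^n(c)` is a factor of `σ^(n+m)(a) = σ^m(σ^n(a))`, which is
at most `K^m` times longer than `σ^n(a)`, where `K` bounds the lengths of the images of letters.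
Taking `m` maximal over the finitely many letters gives the constant.
-/

section Morphism

variable {A : Type*} (σ : A → List A)

theorem iterW_add (m n : ℕ) (w : List A) :
    iterW σ (m + n) w = iterW σ m (iterW σ n w) :=
  Function.iterate_add_apply _ m n w

theorem iterW_comm (m n : ℕ) (w : List A) :
    iterW σ m (iterW σ n w) = iterW σ n (iterW σ m w) := by
  rw [← iterW_add, ← iterW_add, add_comm]

theorem List.Sublist.iterW {v w : List A} (h : v.Sublist w) (n : ℕ) :
    (_root_.iterW σ n v).Sublist (_root_.iterW σ n w) := by
  induction n with
  | zero => exact h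
  | succ n ih =>
    simp only [_root_.iterW, Function.iterate_succ_apply']
    exact ih.flatMap σ

theorem length_mapW_le {K : ℕ} (hK : ∀ c, (σ c).length ≤ K) (w : List A) :
    (mapW σ w).length ≤ K * w.length := by
  induction w with
  | nil => simp [mapW]
  | cons c w ih =>
    simp only [mapW, List.flatMap_cons, List.length_append, List.length_cons] at ih ⊢
    rw [Nat.mul_succ]
    linarith [hK c]

theorem length_iterW_le {K : ℕ} (hK : ∀ c, (σ c).length ≤ K) (n : ℕ) (w : List A) :
    (iterW σ n w).length ≤ K ^ n * w.length := by
  induction n with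
  | zero => simp [iterW]
  | succ n ih =>
    calc (iterW σ (n + 1) w).length
        = (mapW σ (iterW σ n w)).length := by
          rw [iterW, Function.iterate_succ_apply']; rfl
      _ ≤ K * (iterW σ n w).length := length_mapW_le σ hK _
      _ ≤ K ^ (n + 1) * w.length := by
          rw [pow_succ', mul_assoc]; exact Nat.mul_le_mul_left K ih

theorem length_iterW_singleton_le_of_mem_iterW {K : ℕ} (hK : ∀ c, (σ c).length ≤ K)
    {b c : A} {m : ℕ} (hc : c ∈ iterW σ m [b]) (n : ℕ) :
    (iterW σ n [c]).length ≤ K ^ m * (iterW σ n [b]).length :=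
  calc (iterW σ n [c]).length
      ≤ (iterW σ n (iterW σ m [b])).length :=
        ((List.singleton_sublist.mpr hc).iterW σ n).length_le
    _ = (iterW σ m (iterW σ n [b])).length := by rw [iterW_comm]
    _ ≤ K ^ m * (iterW σ n [b]).length := length_iterW_le σ hK m _

theorem mem_iterW_self_of_mem {a : A} (ha : a ∈ σ a) (n : ℕ) : a ∈ iterW σ n [a] := by
  induction n with
  | zero => simp [iterW]
  | succ n ih =>
    rw [iterW, Function.iterate_succ_apply']
    exact List.mem_flatMap.mpr ⟨a, ih, ha⟩

end Morphism

theorem exists_mem_of_forall_isPrefOf {A : Type*} {w : ℕ → List A} {u : ℕ → A}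
    (hu : ∀ n, IsPrefOf (w n) u)
    (hw : Filter.Tendsto (fun n => (w n).length) Filter.atTop Filter.atTop) (i : ℕ) :
    ∃ m, u i ∈ w m := by
  obtain ⟨m, hm⟩ := (hw.eventually_gt_atTop i).exists
  exact ⟨m, hu m ⟨i, hm⟩ ▸ List.get_mem _ _⟩

theorem stmt_1_general {A : Type*} [Fintype A] (σ : A → List A) (a : A)
    (hpro : Prolongable σ a)
    (u : ℕ → A) (hu : ∀ n : ℕ, IsPrefOf (iterW σ n [a]) u)
    (hall : ∀ c : A, ∃ i : ℕ, u i = c) :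
    MaxGrowth σ a := by
  obtain ⟨⟨W, -, hσa⟩, hlen⟩ := hpro
  have ha : a ∈ σ a := hσa ▸ List.mem_cons_self
  have hm : ∀ c, ∃ m, c ∈ iterW σ m [a] := fun c => by
    obtain ⟨i, rfl⟩ := hall c
    exact exists_mem_of_forall_isPrefOf hu hlen i
  choose m hm using hm
  set K := Finset.univ.sup fun c => (σ c).length
  have hK : ∀ c, (σ c).length ≤ K := fun c =>
    Finset.le_sup (f := fun c => (σ c).length) (Finset.mem_univ c)
  have hK1 : 1 ≤ K := (List.length_pos_of_mem ha).trans_le (hK a)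
  refine ⟨K ^ Finset.univ.sup m + 1, fun c n _ => ?_⟩
  have hpos : 0 < (iterW σ n [a]).length := List.length_pos_of_mem (mem_iterW_self_of_mem σ ha n)
  have hpow : K ^ m c ≤ K ^ Finset.univ.sup m :=
    Nat.pow_le_pow_right hK1 (Finset.le_sup (f := m) (Finset.mem_univ c))
  have key : (iterW σ n [c]).length < (K ^ Finset.univ.sup m + 1) * (iterW σ n [a]).length :=
    calc (iterW σ n [c]).length
        ≤ K ^ m c * (iterW σ n [a]).length :=
          length_iterW_singleton_le_of_mem_iterW σ hK (hm c) n
      _ < (K ^ Finset.univ.sup m + 1) * (iterW σ n [a]).length :=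
          Nat.mul_lt_mul_of_lt_of_le (Nat.lt_succ_of_le hpow) le_rfl hpos
  exact_mod_cast key

/-- the starting letter of a non-erasing prolongable morphism whose
fixed point contains all letters has maximal growth. -/
theorem stmt_1 {A : Type*} [Fintype A] (σ : A → List A) (a : A)
    (hne : ∀ c : A, σ c ≠ []) (hpro : Prolongable σ a)
    (u : ℕ → A) (hu : ∀ n : ℕ, IsPrefOf (iterW σ n [a]) u)
    (hall : ∀ c : A, ∃ i : ℕ, u i = c) :
    MaxGrowth σ a :=
  stmt_1_general σ a hpro u hu hall
end

section
/- Let u be an infinite word fixed by a morphism σ, prolongable on its first letter, and suppose some letter b of maximal growth occurs at least twice in u, say u begins with U b V b for finite words U, V (U possibly empty). Then the Diophantine exponent of u is strictly greater than 1; more precisely, there is δ > 0 such that for every n the prefix σⁿ(U)·σⁿ(bV)^{δₙ} of u, with δₙ = 1 + |σⁿ(b)|/|σⁿ(bV)|, satisfies |σⁿ(U)σⁿ(bV)^{δₙ}| / |σⁿ(U)σⁿ(bV)| ≥ 1 + δ. -/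
/-!
The prefix `σⁿ(U b V b)` of `u` splits as `σⁿ(U) · W · σⁿ(b)` with `W = σⁿ(bV)`, and
`σⁿ(b)` is also a prefix of `W`, so it is `σⁿ(U)` followed by the fractional power
`W^{1 + |σⁿ(b)|/|W|}`.
Its ratio is `1 + |σⁿ(b)| / |σⁿ(UbV)|`. Maximal growth of `b` gives an integer `C` with
`|σⁿ(w)| ≤ C |w| |σⁿ(b)|` for every word `w`, so the ratio is at least `1 + 1/(C |UbV|)`.
These prefixes are arbitrarily long, as `|σⁿ(U b V b)| ≥ |σⁿ(u 0)| → ∞`, hence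
`dio u ≥ 1 + 1/(C |UbV|) > 1`.
-/

open Filter

section

variable {A : Type*}

section Morphism

variable (σ : A → List A)

@[simp]
theorem iterW_nil (n : ℕ) : iterW σ n [] = [] :=
  Function.iterate_fixed (by simp [mapW]) n

theorem iterW_append (n : ℕ) (w t : List A) :
    iterW σ n (w ++ t) = iterW σ n w ++ iterW σ n t := by
  induction n generalizing w t with
  | zero => rfl
  | succ n ih =>
    simp only [iterW, Function.iterate_succ_apply] at ih ⊢
    rw [show mapW σ (w ++ t) = mapW σ w ++ mapW σ t from List.flatMap_append, ih]

theorem iterW_cons (n : ℕ) (c : A) (w : List A) :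
    iterW σ n (c :: w) = iterW σ n [c] ++ iterW σ n w :=
  iterW_append σ n [c] w

theorem iterW_iterW (m n : ℕ) (w : List A) : iterW σ m (iterW σ n w) = iterW σ (m + n) w :=
  (Function.iterate_add_apply _ m n w).symm

theorem iterW_prefix (n : ℕ) {w t : List A} (h : w <+: t) : iterW σ n w <+: iterW σ n t := by
  obtain ⟨s, rfl⟩ := h
  exact ⟨iterW σ n s, (iterW_append σ n w s).symm⟩

end Morphism

section Prefix

variable {a : ℕ → A} {w t : List A}

theorem IsPrefOf.of_prefix (hwt : w <+: t) (ht : IsPrefOf t a) : IsPrefOf w a := fun i => by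
  simpa only [List.get_eq_getElem, hwt.getElem i.isLt] using
    ht ⟨i, i.isLt.trans_le hwt.length_le⟩

theorem IsPrefOf.prefix_of_length_le (hw : IsPrefOf w a) (ht : IsPrefOf t a)
    (h : w.length ≤ t.length) : w <+: t := by
  rw [List.prefix_iff_eq_take]
  refine List.ext_getElem (by simp [h]) fun i hi _ => ?_
  rw [List.getElem_take]
  simpa only [List.get_eq_getElem, ← ht ⟨i, hi.trans_le h⟩] using hw ⟨i, hi⟩

theorem IsPrefOf.singleton_prefix (hw : IsPrefOf w a) (hne : w ≠ []) : [a 0] <+: w :=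
  IsPrefOf.prefix_of_length_le (fun ⟨0, _⟩ => rfl) hw (List.length_pos_of_ne_nil hne)

variable {σ : A → List A}
  (hgrow : Tendsto (fun n => (iterW σ n [a 0]).length) atTop atTop)

include hgrow

theorem tendsto_length_iterW (hw : IsPrefOf w a) (hne : w ≠ []) :
    Tendsto (fun n => (iterW σ n w).length) atTop atTop :=
  tendsto_atTop_mono (fun n => (iterW_prefix σ n (hw.singleton_prefix hne)).length_le) hgrow

theorem isPrefOf_iterW (hfix : ∀ n, IsPrefOf (iterW σ n [a 0]) a) (hw : IsPrefOf w a)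
    (n : ℕ) : IsPrefOf (iterW σ n w) a := by
  obtain ⟨m, hm⟩ := (hgrow.eventually_ge_atTop w.length).exists
  have hwm : iterW σ n w <+: iterW σ (n + m) [a 0] := by
    rw [← iterW_iterW]
    exact iterW_prefix σ n (hw.prefix_of_length_le (hfix m) hm)
  exact (hfix (n + m)).of_prefix hwm

end Prefix

theorem fracPow_one_add_div {W : List A} {p : ℕ} (hp : p ≤ W.length) :
    fracPow W (1 + p / W.length) = W ++ W.take p := by
  rcases hp.lt_or_eq with hlt | rfl
  · have hW : (0 : ℝ) < W.length := by exact_mod_cast (Nat.zero_le p).trans_lt hlt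
    have ht0 : (0 : ℝ) ≤ p / W.length := by positivity
    have ht1 : (p : ℝ) / W.length < 1 := (div_lt_one hW).2 (by exact_mod_cast hlt)
    have hfloor : ⌊1 + (p : ℝ) / W.length⌋₊ = 1 := by
      rw [add_comm, Nat.floor_add_one ht0, Nat.floor_eq_zero.2 ht1]
    rw [fracPow, hfloor, Int.fract_one_add, Int.fract_eq_self.2 ⟨ht0, ht1⟩,
      div_mul_cancel₀ _ hW.ne', Nat.ceil_natCast]
    simp
  · rcases eq_or_ne W [] with rfl | hne
    · simp [fracPow]
    have hW : (W.length : ℝ) ≠ 0 := by exact_mod_cast (List.length_pos_of_ne_nil hne).ne'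
    rw [div_self hW, one_add_one_eq_two, fracPow, List.take_length]
    norm_num [List.replicate_succ]

theorem iterW_append_fracPow (σ : A → List A) (n : ℕ) (U V : List A) (b : A) :
    iterW σ n U ++
        fracPow (iterW σ n (b :: V))
          (1 + ((iterW σ n [b]).length : ℝ) / ((iterW σ n (b :: V)).length : ℝ)) =
      iterW σ n (U ++ [b] ++ V ++ [b]) := by
  have hp : (iterW σ n [b]).length ≤ (iterW σ n (b :: V)).length := by
    simp [iterW_cons σ n b V]
  rw [fracPow_one_add_div hp, iterW_cons σ n b V, List.take_left]
  simp only [iterW_append, List.append_assoc]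

theorem coe_le_dio_of_tendsto {a : ℕ → A} {ρ : ℝ} (U V : ℕ → List A) (α : ℕ → ℝ)
    (hV : ∀ n, V n ≠ []) (hα : ∀ n, 1 ≤ α n)
    (hpre : ∀ n, IsPrefOf (U n ++ fracPow (V n) (α n)) a)
    (hlen : Tendsto (fun n => (U n ++ fracPow (V n) (α n)).length) atTop atTop)
    (hρ : ∀ n, ρ ≤ ((U n ++ fracPow (V n) (α n)).length : ℝ) /
      ((U n).length + (V n).length)) :
    (ρ : EReal) ≤ dio a := by
  refine le_sSup ⟨ρ, fun N => ?_, rfl⟩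
  obtain ⟨n, hn⟩ := (hlen.eventually_ge_atTop N).exists
  exact ⟨U n, V n, α n, hV n, hα n, hpre n, hn, hρ n⟩

theorem one_add_inv_le_add_div {x p K : ℝ} (hx : 0 < x) (hp : 0 ≤ p) (h : x ≤ K * p) :
    1 + K⁻¹ ≤ (x + p) / x := by
  have hK : 0 < K := pos_of_mul_pos_left (hx.trans_le h) hp
  rw [add_div, div_self hx.ne', inv_eq_one_div, add_le_add_iff_left, div_le_div_iff₀ hK hx]
  linarith

section MaxGrowth

variable {σ : A → List A} {b : A}

theorem MaxGrowth.length_iterW_pos (hb : MaxGrowth σ b) (n : ℕ) :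
    0 < (iterW σ n [b]).length := by
  rcases Nat.eq_zero_or_pos n with rfl | hn
  · simp [iterW]
  obtain ⟨C, hC⟩ := hb
  by_contra h
  simpa [Nat.eq_zero_of_not_pos h] using hC b n hn

theorem MaxGrowth.exists_length_iterW_le (hb : MaxGrowth σ b) :
    ∃ C : ℕ, 0 < C ∧
      ∀ n w, (iterW σ n w).length ≤ C * w.length * (iterW σ n [b]).length := by
  obtain ⟨C, hC⟩ := hb
  refine ⟨⌈C⌉₊ + 1, Nat.succ_pos _, fun n w => ?_⟩
  have hletter : ∀ c, (iterW σ n [c]).length ≤ (⌈C⌉₊ + 1) * (iterW σ n [b]).length := by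
    intro c
    rcases Nat.eq_zero_or_pos n with rfl | hn
    · simp [iterW]
    have hCle : C ≤ ((⌈C⌉₊ + 1 : ℕ) : ℝ) := by push_cast; linarith [Nat.le_ceil C]
    have hbn : (0 : ℝ) ≤ (iterW σ n [b]).length := Nat.cast_nonneg _
    exact_mod_cast (hC c n hn).le.trans (mul_le_mul_of_nonneg_right hCle hbn)
  induction w with
  | nil => simp
  | cons c w ih =>
    rw [iterW_cons, List.length_append, List.length_cons]
    linarith [hletter c]

theorem MaxGrowth.one_add_inv_le_length_iterW_div (hb : MaxGrowth σ b) {C : ℕ}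
    (hC : ∀ n w, (iterW σ n w).length ≤ C * w.length * (iterW σ n [b]).length)
    (U V : List A) (n : ℕ) :
    1 + ((C : ℝ) * (U ++ b :: V).length)⁻¹ ≤
      ((iterW σ n (U ++ [b] ++ V ++ [b])).length : ℝ) /
        ((iterW σ n U).length + (iterW σ n (b :: V)).length) := by
  have hpx : (iterW σ n [b]).length ≤ (iterW σ n (U ++ b :: V)).length := by
    simp only [iterW_append, iterW_cons σ n b V, List.length_append]
    omega
  have hnum : (iterW σ n (U ++ [b] ++ V ++ [b])).length =
      (iterW σ n (U ++ b :: V)).length + (iterW σ n [b]).length := by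
    rw [show U ++ [b] ++ V ++ [b] = (U ++ b :: V) ++ [b] by simp, iterW_append,
      List.length_append]
  have hden : ((iterW σ n U).length : ℝ) + (iterW σ n (b :: V)).length =
      (iterW σ n (U ++ b :: V)).length := by
    rw [iterW_append, List.length_append, Nat.cast_add]
  rw [hnum, Nat.cast_add, hden]
  refine one_add_inv_le_add_div (Nat.cast_pos.2 ((hb.length_iterW_pos n).trans_le hpx))
    (Nat.cast_nonneg _) ?_
  exact_mod_cast hC n (U ++ b :: V)

end MaxGrowth

end

theorem stmt_4_general {A : Type*} (σ : A → List A)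
    (u : ℕ → A) (hpro : Prolongable σ (u 0))
    (hfix : ∀ n : ℕ, IsPrefOf (iterW σ n [u 0]) u)
    (b : A) (hb : MaxGrowth σ b)
    (U V : List A) (hUV : IsPrefOf (U ++ [b] ++ V ++ [b]) u) :
    (1 : EReal) < dio u ∧
      ∃ δ : ℝ, 0 < δ ∧ ∀ n : ℕ,
        IsPrefOf
          (iterW σ n U ++
            fracPow (iterW σ n (b :: V))
              (1 + ((iterW σ n [b]).length : ℝ) / ((iterW σ n (b :: V)).length : ℝ)))
          u ∧
        1 + δ ≤
          (((iterW σ n U ++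
              fracPow (iterW σ n (b :: V))
                (1 + ((iterW σ n [b]).length : ℝ) /
                  ((iterW σ n (b :: V)).length : ℝ))).length : ℝ)) /
            (((iterW σ n U).length : ℝ) + ((iterW σ n (b :: V)).length : ℝ)) := by
  obtain ⟨C, hC, hCbound⟩ := hb.exists_length_iterW_le
  set K : ℝ := C * (U ++ b :: V).length
  have hK : 0 < K := by
    simp only [K, List.length_append, List.length_cons]
    positivity
  have hgap := hb.one_add_inv_le_length_iterW_div hCbound U V
  have hpre : ∀ n, IsPrefOf (iterW σ n (U ++ [b] ++ V ++ [b])) u :=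
    isPrefOf_iterW hpro.2 hfix hUV
  simp only [iterW_append_fracPow]
  refine ⟨?_, K⁻¹, inv_pos.2 hK, fun n => ⟨hpre n, hgap n⟩⟩
  refine (EReal.coe_lt_coe_iff.2 (lt_add_of_pos_right 1 (inv_pos.2 hK))).trans_le ?_
  refine coe_le_dio_of_tendsto (fun n => iterW σ n U) (fun n => iterW σ n (b :: V))
    (fun n => 1 + ((iterW σ n [b]).length : ℝ) / (iterW σ n (b :: V)).length)
    (fun n => ?_) (fun n => le_add_of_nonneg_right (by positivity)) ?_ ?_ ?_
  · rw [iterW_cons]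
    exact List.append_ne_nil_of_left_ne_nil (List.ne_nil_of_length_pos (hb.length_iterW_pos n)) _
  all_goals simp only [iterW_append_fracPow]
  · exact hpre
  · exact tendsto_length_iterW hpro.2 hUV (by simp)
  · exact hgap

/-- if a letter `b` of maximal growth occurs twice in a fixed point `u`
(say `u` begins with `U b V b`), then the prefixes `σⁿ(U) σⁿ(bV)^{δₙ}` with
`δₙ = 1 + |σⁿ(b)|/|σⁿ(bV)|` witness `dio(u) > 1` with a uniform gap `δ`. -/
theorem stmt_4 {A : Type*} [Fintype A] (σ : A → List A)
    (u : ℕ → A) (hpro : Prolongable σ (u 0))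
    (hfix : ∀ n : ℕ, IsPrefOf (iterW σ n [u 0]) u)
    (b : A) (hb : MaxGrowth σ b)
    (U V : List A) (hUV : IsPrefOf (U ++ [b] ++ V ++ [b]) u) :
    (1 : EReal) < dio u ∧
      ∃ δ : ℝ, 0 < δ ∧ ∀ n : ℕ,
        IsPrefOf
          (iterW σ n U ++
            fracPow (iterW σ n (b :: V))
              (1 + ((iterW σ n [b]).length : ℝ) / ((iterW σ n (b :: V)).length : ℝ)))
          u ∧
        1 + δ ≤
          (((iterW σ n U ++
              fracPow (iterW σ n (b :: V))
                (1 + ((iterW σ n [b]).length : ℝ) /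
                  ((iterW σ n (b :: V)).length : ℝ))).length : ℝ)) /
            (((iterW σ n U).length : ℝ) + ((iterW σ n (b :: V)).length : ℝ)) :=
  stmt_4_general σ u hpro hfix b hb U V hUV
end

section
/- Let V be a nonempty primitive finite word and W a finite word having both periods |V| and |σ(V)| (i.e. W is a prefix of Ṽ^∞ for some conjugate Ṽ of V, and a prefix of σ(V)^∞), with |W| ≥ |σ(V)| + |V|, where σ is a morphism. Then σ(V) is an integer power of the conjugate Ṽ of V. -/
/-!
By Fine and Wilf, `W` has period `gcd(|Ṽ|, |σ(V)|)`, and hence so does its prefix `Ṽ`.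
This period divides `|Ṽ|`, and `Ṽ` is primitive as a conjugate of the primitive word `V`,
so it equals `|Ṽ|`. Thus `|Ṽ|` divides `|σ(V)|`, and `σ(V)`, the prefix of `W` of that length,
is a power of `Ṽ`.
-/

namespace List

variable {α : Type*}

def IsPrimitive (v : List α) : Prop :=
  v ≠ [] ∧ ∀ (u : List α) (m : ℕ), u.length < v.length → v ≠ (replicate m u).flatten

theorem hasPeriod_flatten_replicate (u : List α) (n : ℕ) :
    (replicate n u).flatten.HasPeriod u.length := by
  cases n with
  | zero => exact hasPeriod_empty _
  | succ n =>
    have hcomm : u ++ (replicate n u).flatten = (replicate n u).flatten ++ u := by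
      rw [← flatten_cons, ← replicate_succ, replicate_succ', flatten_concat]
    rw [HasPeriod, replicate_succ, flatten_cons, take_left, prefix_append_right_inj, hcomm]
    exact prefix_append _ _

theorem prefix_of_prefix_flatten_replicate {u w : List α} {n : ℕ}
    (hw : w <+: (replicate n u).flatten) (hu : u.length ≤ w.length) : u <+: w := by
  cases n with
  | zero =>
    obtain rfl : w = [] := by simpa using hw
    simp_all
  | succ n =>
    refine prefix_of_prefix_length_le ?_ hw hu
    rw [replicate_succ, flatten_cons]
    exact prefix_append _ _

theorem HasPeriod.drop_mul_prefix {w : List α} {p : ℕ} (hp : w.HasPeriod p) (j : ℕ) :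
    w.drop (p * j) <+: w := by
  induction j with
  | zero => simp
  | succ j ih =>
    rw [Nat.mul_succ, ← drop_drop]
    exact ((hp.infix (drop_suffix _ _).isInfix).drop_prefix p).trans ih

theorem HasPeriod.take_mul_eq_flatten_replicate {w : List α} {p : ℕ} (hp : w.HasPeriod p)
    {j : ℕ} (hj : p * j ≤ w.length) : w.take (p * j) = (replicate j (w.take p)).flatten := by
  induction j with
  | zero => simp
  | succ j ih =>
    rw [Nat.mul_succ] at hj ⊢
    have hshift : (w.drop (p * j)).take p = w.take p := by
      rw [prefix_iff_eq_take.mp (hp.drop_mul_prefix j), take_take, length_drop,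
        min_eq_left (by omega)]
    rw [take_add, ih (by omega), hshift, replicate_succ', flatten_concat]

namespace IsPrimitive

theorem le_of_hasPeriod {v : List α} (hv : v.IsPrimitive) {g : ℕ} (hg : v.HasPeriod g)
    (hdvd : g ∣ v.length) : v.length ≤ g := by
  by_contra! hlt
  obtain ⟨j, hj⟩ := hdvd
  refine hv.2 (v.take g) j (by simpa using hlt) ?_
  rw [← hg.take_mul_eq_flatten_replicate hj.ge, ← hj, take_length]

theorem append_comm {x y : List α} (h : (x ++ y).IsPrimitive) : (y ++ x).IsPrimitive := by
  refine ⟨fun hnil => h.1 (by simp_all), fun u m hu hyx => ?_⟩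
  have hper : (x ++ y).HasPeriod u.length := by
    have hsq : (y ++ x) ++ (y ++ x) = (replicate (m + m) u).flatten := by
      rw [replicate_add, flatten_append, hyx]
    refine (hasPeriod_flatten_replicate u (m + m)).infix ⟨y, x, ?_⟩
    rw [← hsq]
    simp
  have hdvd : u.length ∣ (x ++ y).length := by
    rw [length_append, Nat.add_comm, ← length_append, hyx]
    simp
  have := h.le_of_hasPeriod hper hdvd
  simp only [length_append] at this hu
  omega

end IsPrimitive

end List

open List

/-- if `V` is primitive, `Ṽ` a conjugate of `V`, and `W` is both a
prefix of `Ṽ^∞` and of `σ(V)^∞` with `|W| ≥ |σ(V)| + |V|`, then `σ(V)` is an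
integer power of `Ṽ`. -/
theorem stmt_9 {A : Type*} (σ : A → List A) (V Vt W : List A)
    (hVne : V ≠ [])
    (hVprim : ∀ (U : List A) (m : ℕ), U.length < V.length →
      V ≠ (List.replicate m U).flatten)
    (hconj : ∃ X Y : List A, V = X ++ Y ∧ Vt = Y ++ X)
    (hper1 : W <+: (List.replicate W.length Vt).flatten)
    (hper2 : W <+: (List.replicate W.length (mapW σ V)).flatten)
    (hlen : (mapW σ V).length + V.length ≤ W.length) :
    ∃ m : ℕ, mapW σ V = (List.replicate m Vt).flatten := by
  have hprim : Vt.IsPrimitive := by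
    obtain ⟨X, Y, rfl, rfl⟩ := hconj
    exact IsPrimitive.append_comm ⟨hVne, hVprim⟩
  have hVt : Vt.length = V.length := by
    obtain ⟨X, Y, rfl, rfl⟩ := hconj
    simp [Nat.add_comm]
  have hWp : W.HasPeriod Vt.length := (hasPeriod_flatten_replicate _ _).infix hper1.isInfix
  have hWq : W.HasPeriod (mapW σ V).length :=
    (hasPeriod_flatten_replicate _ _).infix hper2.isInfix
  have hVtW : Vt <+: W := prefix_of_prefix_flatten_replicate hper1 (by omega)
  have hσW : mapW σ V <+: W := prefix_of_prefix_flatten_replicate hper2 (by omega)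
  have hgcd : Vt.length.gcd (mapW σ V).length = Vt.length :=
    le_antisymm (Nat.gcd_le_left _ (length_pos_iff.mpr hprim.1))
      (hprim.le_of_hasPeriod ((hWp.gcd hWq (by omega)).infix hVtW.isInfix)
        (Nat.gcd_dvd_left _ _))
  obtain ⟨m, hm⟩ := Nat.gcd_eq_left_iff_dvd.mp hgcd
  refine ⟨m, ?_⟩
  rw [prefix_iff_eq_take.mp hσW, hm, hWp.take_mul_eq_flatten_replicate (by omega),
    ← prefix_iff_eq_take.mp hVtW]
end

section
/- (Fine and Wilf) If a finite word W has periods p and q and |W| ≥ p + q − gcd(p, q), then W has period gcd(p, q). -/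
/-- `W` has period `p`: `W_i = W_{i+p}` whenever both indices are valid. -/
def HasPeriod {A : Type*} (W : List A) (p : ℕ) : Prop :=
  1 ≤ p ∧ ∀ i : ℕ, ∀ h : i + p < W.length,
    W.get ⟨i, Nat.lt_of_le_of_lt (Nat.le_add_right i p) h⟩ = W.get ⟨i + p, h⟩

theorem hasPeriod_iff_one_le_and_list_hasPeriod {A : Type*} {W : List A} {p : ℕ} :
    HasPeriod W p ↔ 1 ≤ p ∧ W.HasPeriod p := by
  refine and_congr_right fun _ => ?_
  rw [List.hasPeriod_iff_getElem?]
  refine forall_congr' fun i => ⟨fun h hi => ?_, fun h hi => ?_⟩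
  · have hlt : i + p < W.length := by omega
    simpa [List.getElem?_eq_getElem hlt, List.getElem?_eq_getElem (by omega : i < W.length)]
      using h hlt
  · simpa [List.getElem?_eq_getElem hi, List.getElem?_eq_getElem (by omega : i < W.length)]
      using h (by omega)

/-- Fine and Wilf: a word of length at least `p + q - gcd(p,q)`
with periods `p` and `q` has period `gcd(p,q)`. -/
theorem stmt_10 {A : Type*} (W : List A) (p q : ℕ)
    (hp : HasPeriod W p) (hq : HasPeriod W q)
    (hlen : p + q - Nat.gcd p q ≤ W.length) :
    HasPeriod W (Nat.gcd p q) := by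
  rw [hasPeriod_iff_one_le_and_list_hasPeriod] at hp hq ⊢
  exact ⟨Nat.gcd_pos_of_pos_left q hp.1, hp.2.gcd hq.2 hlen⟩
end

section
/- Let a be an infinite word output by a k-automaton with at most M states over output alphabet of size at most k. Then the factor complexity of a satisfies p(a, n) ≤ k M² n for all n ≥ 1. -/
/-!
Take `K = k ^ m` with `n ≤ K ≤ k (n - 1) + 1`. For `c ≥ 1` and `s < K` the base-`k` expansion of
`c K + s` is that of `c` followed by `s` padded to `m` digits, so `a (c K + s)` depends only on `s`
and on the state reached after reading `c`. As `n ≤ K`, a factor starting at `c K + r` meets at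
most the blocks `c` and `c + 1`, so it is determined by `r` and the states reached after `c` and
`c + 1`, and by `r` and a single state when it stays inside block `c`. This gives at most
`(K - n + 1) M + (n - 1) M² + (K - 1)` factors, the last term counting those starting before `K`,
and this is at most `k M² n` when `M ≥ 2`. A one-state automaton outputs a constant sequence.
-/

def factorSet {Δ : Type*} (a : ℕ → Δ) (n : ℕ) : Set (List Δ) :=
  {w | ∃ j : ℕ, 1 ≤ j ∧ w = List.ofFn fun i : Fin n => a (j + i)}

theorem ncard_factorSet_le_one_of_eq {Δ : Type*} {a : ℕ → Δ} {d : Δ}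
    (had : ∀ j, 1 ≤ j → a j = d) (n : ℕ) : (factorSet a n).ncard ≤ 1 := by
  have hsub : factorSet a n ⊆ {List.ofFn fun _ : Fin n => d} := by
    rintro w ⟨j, hj, rfl⟩
    exact congrArg List.ofFn (funext fun i => had _ (by omega))
  exact (Set.ncard_le_ncard hsub (Set.finite_singleton _)).trans_eq (Set.ncard_singleton _)

section Blocks

variable {Q Δ : Type*} (out : Q → ℕ → Δ) (K n : ℕ)

/-- The length-`n` window at offset `r` of a block of length `K` read from state `q`, running
over into the next block, read from state `q'`. -/
def blockWindow (q q' : Q) (r : ℕ) : List Δ :=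
  List.ofFn fun i : Fin n =>
    if r + i < K then out q (r + i) else out q' (r + i - K)

variable {out K n}

theorem blockWindow_of_add_le {r : ℕ} (hr : r + n ≤ K) (q q' : Q) :
    blockWindow out K n q q' r = blockWindow out K n q q r := by
  refine congrArg List.ofFn (funext fun i => ?_)
  rw [if_pos (by omega), if_pos (by omega)]

theorem ofFn_eq_blockWindow {a : ℕ → Δ} {state : ℕ → Q}
    (hblock : ∀ c s, 1 ≤ c → s < K → a (c * K + s) = out (state c) s) (hnK : n ≤ K)
    {c r : ℕ} (hc : 1 ≤ c) (hr : r < K) :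
    (List.ofFn fun i : Fin n => a (c * K + r + i)) =
      blockWindow out K n (state c) (state (c + 1)) r := by
  refine congrArg List.ofFn (funext fun i => ?_)
  split_ifs with hi
  · rw [add_assoc, hblock c _ hc hi]
  · have : c * K + r + i = (c + 1) * K + (r + i - K) := by rw [add_mul]; omega
    rw [this, hblock (c + 1) _ (by omega) (by omega)]

theorem ncard_factorSet_le_of_blocks [Fintype Q] {a : ℕ → Δ} (state : ℕ → Q)
    (hblock : ∀ c s, 1 ≤ c → s < K → a (c * K + s) = out (state c) s) (hnK : n ≤ K) (hK : 0 < K) :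
    (factorSet a n).ncard ≤
      (K - n + 1) * Fintype.card Q + (n - 1) * Fintype.card Q ^ 2 + (K - 1) := by
  classical
  set inner : Finset (List Δ) := (Finset.range (K - n + 1) ×ˢ Finset.univ).image
    fun p : ℕ × Q => blockWindow out K n p.2 p.2 p.1
  set crossing : Finset (List Δ) := (Finset.Ico (K - n + 1) K ×ˢ Finset.univ).image
    fun p : ℕ × Q × Q => blockWindow out K n p.2.1 p.2.2 p.1
  set initial : Finset (List Δ) := (Finset.Ico 1 K).image
    fun j => List.ofFn fun i : Fin n => a (j + i)
  have hsub : factorSet a n ⊆ ↑(inner ∪ crossing ∪ initial) := by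
    rintro w ⟨j, hj, rfl⟩
    simp only [Finset.coe_union, Set.mem_union, Finset.mem_coe]
    by_cases hjK : j < K
    · exact Or.inr (Finset.mem_image.mpr ⟨j, Finset.mem_Ico.mpr ⟨hj, hjK⟩, rfl⟩)
    have hjcr : j = j / K * K + j % K := (Nat.div_add_mod' j K).symm
    have hc : 1 ≤ j / K := (Nat.one_le_div_iff hK).mpr (by omega)
    have hr : j % K < K := Nat.mod_lt _ hK
    rw [hjcr, ofFn_eq_blockWindow hblock hnK hc hr]
    by_cases hin : j % K + n ≤ K
    · refine Or.inl (Or.inl (Finset.mem_image.mpr ⟨(j % K, state (j / K)), ?_, ?_⟩))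
      · simp only [Finset.mem_product, Finset.mem_range, Finset.mem_univ, and_true]; omega
      · exact (blockWindow_of_add_le hin _ _).symm
    · refine Or.inl (Or.inr (Finset.mem_image.mpr
        ⟨(j % K, state (j / K), state (j / K + 1)), ?_, rfl⟩))
      simp only [Finset.mem_product, Finset.mem_Ico, Finset.mem_univ, and_true]; omega
  calc (factorSet a n).ncard ≤ (inner ∪ crossing ∪ initial).card :=
        (Set.ncard_le_ncard hsub (Finset.finite_toSet _)).trans_eq (Set.ncard_coe_finset _)
    _ ≤ inner.card + crossing.card + initial.card :=
        (Finset.card_union_le _ _).trans (Nat.add_le_add_right (Finset.card_union_le _ _) _)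
    _ ≤ (K - n + 1) * Fintype.card Q + (n - 1) * Fintype.card Q ^ 2 + (K - 1) := by
        gcongr
        · exact Finset.card_image_le.trans (by simp)
        · refine Finset.card_image_le.trans ?_
          simp only [Finset.card_product, Nat.card_Ico, Finset.card_univ, Fintype.card_prod]
          rw [sq, show K - (K - n + 1) = n - 1 by omega]
        · exact Finset.card_image_le.trans (by simp)

end Blocks

theorem exists_foldl_digits_mul_pow_add {Q : Type*} {k : ℕ} (hk : 1 < k) (δ : Q → ℕ → Q)
    (q₀ : Q) (m : ℕ) :
    ∃ out : Q → ℕ → Q, ∀ c s, 1 ≤ c → s < k ^ m →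
      ((Nat.digits k (c * k ^ m + s)).reverse.foldl δ q₀) =
        out ((Nat.digits k c).reverse.foldl δ q₀) s := by
  refine ⟨fun q s => (Nat.digits k s ++ List.replicate (m - (Nat.digits k s).length) 0).reverse.foldl δ q,
    fun c s hc hs => ?_⟩
  have hlen : (Nat.digits k s).length ≤ m := (Nat.digits_length_le_iff hk s).mpr hs
  dsimp only
  rw [← List.foldl_append, ← List.reverse_append, Nat.digits_append_zeroes_append_digits hk hc,
    Nat.add_sub_cancel' hlen, add_comm, mul_comm]

theorem exists_pow_mem_Icc {k n : ℕ} (hk : 1 < k) (hn : 1 ≤ n) :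
    ∃ m, n ≤ k ^ m ∧ k ^ m ≤ k * (n - 1) + 1 := by
  refine ⟨Nat.clog k n, Nat.le_pow_clog hk n, ?_⟩
  rcases hn.eq_or_lt with rfl | hn
  · simp
  have hpred : k ^ (Nat.clog k n).pred < n := Nat.pow_pred_clog_lt_self hk hn
  obtain ⟨p, hp⟩ := Nat.exists_eq_add_one_of_ne_zero (Nat.clog_pos hk hn).ne'
  rw [hp, Nat.pred_succ] at hpred
  calc k ^ Nat.clog k n = k * k ^ p := by rw [hp, pow_succ']
    _ ≤ k * (n - 1) := Nat.mul_le_mul_left k (by omega)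
    _ ≤ k * (n - 1) + 1 := Nat.le_succ _

theorem block_count_le {k M n K : ℕ} (hk : 2 ≤ k) (hM : 2 ≤ M) (hn : 1 ≤ n) (hnK : n ≤ K)
    (hK : K ≤ k * (n - 1) + 1) :
    (K - n + 1) * M + (n - 1) * M ^ 2 + (K - 1) ≤ k * M ^ 2 * n := by
  obtain ⟨k, rfl⟩ := Nat.exists_eq_add_of_le hk
  obtain ⟨M, rfl⟩ := Nat.exists_eq_add_of_le hM
  obtain ⟨t, rfl⟩ := Nat.exists_eq_add_of_le hnK
  obtain ⟨n, rfl⟩ := Nat.exists_eq_add_of_le hn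
  have ht : t ≤ (k + 1) * n := by rw [Nat.add_sub_cancel_left] at hK; linarith
  rw [show 1 + n + t - (1 + n) + 1 = t + 1 by omega, show 1 + n - 1 = n by omega,
    show 1 + n + t - 1 = n + t by omega]
  have htM := Nat.mul_le_mul_right (2 + M) ht
  ring_nf at htM ⊢
  omega

theorem stmt_19_general {Q Δ : Type*} [Fintype Q] (k M : ℕ) (hk : 2 ≤ k)
    (hQ : Fintype.card Q ≤ M)
    (δ : Q → ℕ → Q) (q₀ : Q) (τ : Q → Δ) (a : ℕ → Δ)
    (ha : ∀ n : ℕ, 1 ≤ n →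
      a n = τ (List.foldl δ q₀ ((Nat.digits k n).reverse))) :
    ∀ n : ℕ, 1 ≤ n →
      {w : List Δ | ∃ j : ℕ, 1 ≤ j ∧
        w = List.ofFn fun i : Fin n => a (j + i)}.ncard ≤ k * M ^ 2 * n := by
  intro n hn
  change (factorSet a n).ncard ≤ _
  by_cases hQ1 : Fintype.card Q ≤ 1
  · have : Subsingleton Q := Fintype.card_le_one_iff_subsingleton.mp hQ1
    refine (ncard_factorSet_le_one_of_eq (d := τ q₀) (fun j hj => ?_) n).trans ?_
    · rw [ha j hj, Subsingleton.elim (List.foldl _ _ _) q₀]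
    · have : 1 ≤ M := (Fintype.card_pos_iff.mpr ⟨q₀⟩).trans_le hQ
      exact Nat.one_le_iff_ne_zero.mpr (by positivity)
  obtain ⟨m, hnK, hKn⟩ := exists_pow_mem_Icc (by omega : 1 < k) hn
  obtain ⟨out, hout⟩ := exists_foldl_digits_mul_pow_add (by omega : 1 < k) δ q₀ m
  have hblock : ∀ c s, 1 ≤ c → s < k ^ m →
      a (c * k ^ m + s) = τ (out ((Nat.digits k c).reverse.foldl δ q₀) s) := fun c s hc hs => by
    rw [ha _ (by nlinarith [Nat.one_le_pow m k (by omega)]), hout c s hc hs]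
  calc (factorSet a n).ncard
      ≤ (k ^ m - n + 1) * Fintype.card Q + (n - 1) * Fintype.card Q ^ 2 + (k ^ m - 1) :=
        ncard_factorSet_le_of_blocks (out := fun q s => τ (out q s)) _ hblock hnK (by positivity)
    _ ≤ (k ^ m - n + 1) * M + (n - 1) * M ^ 2 + (k ^ m - 1) := by gcongr
    _ ≤ k * M ^ 2 * n := block_count_le hk (by omega) hn hnK hKn

/-- the factor complexity of the output of a `k`-automaton with at
most `M` states (and output alphabet of size at most `k`) satisfies
`p(a, n) ≤ k M² n`. -/
theorem stmt_19 {Q Δ : Type*} [Fintype Q] [Fintype Δ] (k M : ℕ) (hk : 2 ≤ k)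
    (hQ : Fintype.card Q ≤ M) (hΔ : Fintype.card Δ ≤ k)
    (δ : Q → ℕ → Q) (q₀ : Q) (τ : Q → Δ) (a : ℕ → Δ)
    (ha : ∀ n : ℕ, 1 ≤ n →
      a n = τ (List.foldl δ q₀ ((Nat.digits k n).reverse))) :
    ∀ n : ℕ, 1 ≤ n →
      {w : List Δ | ∃ j : ℕ, 1 ≤ j ∧
        w = List.ofFn fun i : Fin n => a (j + i)}.ncard ≤ k * M ^ 2 * n :=
  stmt_19_general k M hk hQ δ q₀ τ a ha
end
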